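/- Let V and W be real Banach spaces and let L be a nonempty symmetric closed subset of V. For every Φ ∈ C_{b,e}(L, W) there exists a unique continuous function Φ̃ : (Γ(L), d_H) → W such that Φ = Φ̃ ∘ Γ. Moreover, the map I_L : Φ ↦ Φ̃ is a linear isometry from (C_{b,e}(L, W), ‖·‖_∞) onto its image, and this image is a closed linear subspace of the Banach space C_b(Γ(L), W) of bounded continuous W-valued functions on (Γ(L), d_H) with the sup-norm. -/

import Mathlib

open Filter Topology Set TopologicalSpace BoundedContinuousFunction

noncomputable section

/-- The two-point set `{x, -x}` as a nonempty compact subset of `V`. -/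
def pairNC {V : Type*} [NormedAddCommGroup V] (x : V) :
    TopologicalSpace.NonemptyCompacts V where
  carrier := {x, -x}
  isCompact' := (Set.toFinite ({x, -x} : Set V)).isCompact
  nonempty' := ⟨x, Or.inl rfl⟩

/-- `Γ(L) = {{x,-x} : x ∈ L}` inside the nonempty compact subsets of `V`, carrying the
Hausdorff distance, for which `d_H({x,-x}, {y,-y}) = min (‖x-y‖, ‖x+y‖)`. -/
def GammaSet {V : Type*} [NormedAddCommGroup V] (L : Set V) :
    Set (TopologicalSpace.NonemptyCompacts V) :=
  {K | ∃ x ∈ L, K = pairNC x}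

/-- The canonical surjection `Γ : L → Γ(L)`, `x ↦ {x, -x}`. -/
def gammaPt {V : Type*} [NormedAddCommGroup V] (L : Set V) (x : ↥L) : ↥(GammaSet L) :=
  ⟨pairNC (x : V), ⟨(x : V), x.2, rfl⟩⟩

/-- `C_{b,e}(L, W)`: the subspace of the bounded continuous functions `L → W` consisting of
the even ones, i.e. those with `Φ(-x) = Φ(x)` whenever `x, -x ∈ L`. -/
def evenSubspace (V : Type*) [NormedAddCommGroup V] (W : Type*) [NormedAddCommGroup W]
    [NormedSpace ℝ W] (L : Set V) :
    Submodule ℝ (BoundedContinuousFunction ↥L W) where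
  carrier := {Φ | ∀ (x : ↥L) (hx : -(x : V) ∈ L), Φ ⟨-(x : V), hx⟩ = Φ x}
  add_mem' := by
    intro f g hf hg x hx
    simp [hf x hx, hg x hx]
  zero_mem' := by intro x hx; simp
  smul_mem' := by
    intro c f hf x hx
    simp [hf x hx]

/-!
`Γ : L → Γ(L)` is 1-Lipschitz and surjective, and for symmetric `L` it is open, hence a quotient
map. A function on `L` is even exactly when it is constant on the fibres `{x, -x}` of `Γ`, so even
bounded continuous functions descend along `Γ`; and precomposition with a surjection preserves sup
norms. Hence `f ↦ f ∘ Γ` is an isometric isomorphism `C_b(Γ(L), W) ≃ C_{b,e}(L, W)`. Its inverse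
is `I_L`, whose image is therefore all of `C_b(Γ(L), W)`.
-/

namespace BoundedContinuousFunction

variable {X Y E : Type*} [TopologicalSpace X] [TopologicalSpace Y] [SeminormedAddCommGroup E]

theorem norm_compContinuous_of_surjective (f : Y →ᵇ E) {g : C(X, Y)}
    (hg : Function.Surjective g) : ‖f.compContinuous g‖ = ‖f‖ := by
  refine le_antisymm (norm_compContinuous_le f g) ((norm_le (norm_nonneg _)).2 fun y => ?_)
  obtain ⟨x, rfl⟩ := hg y
  exact (f.compContinuous g).norm_coe_le_norm x

theorem exists_compContinuous_eq_of_isQuotientMap {g : C(X, Y)} (hg : IsQuotientMap g)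
    (Φ : X →ᵇ E) (hΦ : Function.FactorsThrough Φ g) : ∃ f : Y →ᵇ E, f.compContinuous g = Φ := by
  let f₀ := hg.lift Φ.toContinuousMap hΦ
  have hf₀ (x : X) : f₀ (g x) = Φ x := congr($(hg.lift_comp Φ.toContinuousMap hΦ) x)
  refine ⟨ofNormedAddCommGroup f₀ f₀.continuous ‖Φ‖ fun y => ?_, ext hf₀⟩
  obtain ⟨x, rfl⟩ := hg.surjective y
  exact hf₀ x ▸ Φ.norm_coe_le_norm x

variable (E) (𝕜 : Type*) [NormedField 𝕜] [NormedSpace 𝕜 E]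

def compContinuousₗᵢ {g : C(X, Y)} (hg : Function.Surjective g) : (Y →ᵇ E) →ₗᵢ[𝕜] X →ᵇ E where
  toLinearMap := (compContinuousCLM E 𝕜 g).toLinearMap
  norm_map' f := norm_compContinuous_of_surjective f hg

end BoundedContinuousFunction

section Gamma

variable {V : Type*} [NormedAddCommGroup V]

theorem pairNC_neg (x : V) : pairNC (-x) = pairNC x :=
  NonemptyCompacts.ext <| by simp [pairNC, Set.pair_comm]

theorem pairNC_eq_pairNC_iff {x y : V} : pairNC x = pairNC y ↔ y = x ∨ y = -x := by
  refine ⟨fun h => ?_, ?_⟩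
  · have hy : y ∈ (pairNC y : Set V) := Or.inl rfl
    rwa [← h] at hy
  · rintro (rfl | rfl)
    exacts [rfl, (pairNC_neg x).symm]

theorem dist_pairNC_le (x y : V) : dist (pairNC x) (pairNC y) ≤ dist x y := by
  rw [Metric.NonemptyCompacts.dist_eq]
  apply Metric.hausdorffDist_le_of_mem_dist dist_nonneg
  · rintro z (rfl | rfl)
    exacts [⟨y, Or.inl rfl, le_rfl⟩, ⟨-y, Or.inr rfl, (dist_neg_neg x y).le⟩]
  · rintro z (rfl | rfl)
    exacts [⟨x, Or.inl rfl, (dist_comm z x).le⟩, ⟨-x, Or.inr rfl, by rw [dist_neg_neg, dist_comm]⟩]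

theorem dist_lt_or_dist_neg_lt_of_dist_pairNC_lt {x y : V} {r : ℝ}
    (h : dist (pairNC x) (pairNC y) < r) : dist y x < r ∨ dist y (-x) < r := by
  rw [Metric.NonemptyCompacts.dist_eq] at h
  have hfin : Metric.hausdorffEDist (pairNC x : Set V) (pairNC y) ≠ ⊤ :=
    Metric.hausdorffEDist_ne_top_of_nonempty_of_bounded (pairNC x).nonempty (pairNC y).nonempty
      (pairNC x).isCompact.isBounded (pairNC y).isCompact.isBounded
  obtain ⟨z, hz, hd⟩ := Metric.exists_dist_lt_of_hausdorffDist_lt' (y := y) (Or.inl rfl) h hfin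
  rw [dist_comm] at hd
  rcases hz with rfl | rfl
  exacts [Or.inl hd, Or.inr hd]

variable (L : Set V)

theorem gammaPt_neg (x : V) (hx : x ∈ L) (hnx : -x ∈ L) :
    gammaPt L ⟨-x, hnx⟩ = gammaPt L ⟨x, hx⟩ :=
  Subtype.ext (pairNC_neg x)

theorem gammaPt_surjective : Function.Surjective (gammaPt L) := by
  rintro ⟨K, x, hx, rfl⟩
  exact ⟨⟨x, hx⟩, rfl⟩

theorem lipschitzWith_gammaPt : LipschitzWith 1 (gammaPt L) :=
  LipschitzWith.of_dist_le_mul fun x y => by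
    simpa [Subtype.dist_eq, gammaPt] using dist_pairNC_le (x : V) y

def gammaPtCM : C(L, GammaSet L) := ⟨gammaPt L, (lipschitzWith_gammaPt L).continuous⟩

variable {L}

/-- A point at distance `< ε` from `Γ(x)` is `Γ(y)` with `y` or `-y` in the `ε`-ball about `x`,
and `Γ(-y) = Γ(y)` when `L` is symmetric. -/
theorem isOpenMap_gammaPt (hL : ∀ x ∈ L, -x ∈ L) : IsOpenMap (gammaPt L) := by
  refine isOpenMap_iff_nhds_le.2 fun x => Filter.le_map fun s hs => ?_
  obtain ⟨ε, hε, hball⟩ := Metric.mem_nhds_iff.1 hs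
  refine Metric.mem_nhds_iff.2 ⟨ε, hε, ?_⟩
  rintro ⟨_, y, hy, rfl⟩ hxy
  rw [Metric.mem_ball, Subtype.dist_eq, dist_comm] at hxy
  rcases dist_lt_or_dist_neg_lt_of_dist_pairNC_lt hxy with h | h
  · exact ⟨⟨y, hy⟩, hball h, rfl⟩
  · refine ⟨⟨-y, hL y hy⟩, hball ?_, gammaPt_neg L y hy _⟩
    rwa [Metric.mem_ball, Subtype.dist_eq, ← dist_neg_neg, neg_neg]

theorem isQuotientMap_gammaPt (hL : ∀ x ∈ L, -x ∈ L) : IsQuotientMap (gammaPt L) :=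
  (isOpenMap_gammaPt hL).isQuotientMap (lipschitzWith_gammaPt L).continuous
    (gammaPt_surjective L)

variable {W : Type*} [NormedAddCommGroup W] [NormedSpace ℝ W]

theorem mem_evenSubspace_iff_factorsThrough {Φ : L →ᵇ W} :
    Φ ∈ evenSubspace V W L ↔ Function.FactorsThrough Φ (gammaPt L) := by
  refine ⟨fun hΦ x y hxy => ?_, fun hΦ x hx => hΦ (gammaPt_neg L x x.2 hx)⟩
  rcases pairNC_eq_pairNC_iff.1 (congrArg Subtype.val hxy) with h | h
  · exact congrArg Φ (Subtype.ext h.symm)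
  · have hx : -(x : V) ∈ L := h ▸ y.2
    rw [← hΦ x hx]
    exact congrArg Φ (Subtype.ext h.symm)

theorem compContinuous_gammaPtCM_mem_evenSubspace (f : GammaSet L →ᵇ W) :
    f.compContinuous (gammaPtCM L) ∈ evenSubspace V W L :=
  mem_evenSubspace_iff_factorsThrough.2 fun _ _ h => congrArg f h

variable (W) in
/-- `f ↦ f ∘ Γ`; the map `I_L` of the theorem is its inverse. -/
def evenEquiv (hL : ∀ x ∈ L, -x ∈ L) : (GammaSet L →ᵇ W) ≃ₗᵢ[ℝ] evenSubspace V W L :=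
  LinearIsometryEquiv.ofSurjective
    { toLinearMap := (BoundedContinuousFunction.compContinuousₗᵢ W ℝ
          (gammaPt_surjective L)).toLinearMap.codRestrict _
          compContinuous_gammaPtCM_mem_evenSubspace
      norm_map' := (BoundedContinuousFunction.compContinuousₗᵢ W ℝ
          (gammaPt_surjective L)).norm_map }
    fun Φ => by
      obtain ⟨f, hf⟩ := BoundedContinuousFunction.exists_compContinuous_eq_of_isQuotientMap
        (g := gammaPtCM L) (isQuotientMap_gammaPt hL) Φ
        (mem_evenSubspace_iff_factorsThrough (W := W).1 Φ.2)
      exact ⟨f, Subtype.ext hf⟩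

theorem evenEquiv_symm_apply_gammaPt (hL : ∀ x ∈ L, -x ∈ L) (Φ : evenSubspace V W L) (x : L) :
    (evenEquiv W hL).symm Φ (gammaPt L x) = (Φ : L →ᵇ W) x :=
  congr(($((evenEquiv W hL).apply_symm_apply Φ) : L →ᵇ W) x)

end Gamma

theorem statement5_general {V W : Type*} [NormedAddCommGroup V]
    [NormedAddCommGroup W] [NormedSpace ℝ W]
    (L : Set V) (hLsym : ∀ x ∈ L, -x ∈ L) :
    (∀ Φ : evenSubspace V W L,
      ∃! Φt : ↥(GammaSet L) → W, Continuous Φt ∧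
        ∀ x : ↥L, Φt (gammaPt L x) = (Φ : BoundedContinuousFunction ↥L W) x) ∧
    ∃ I : ↥(evenSubspace V W L) →ₗᵢ[ℝ] BoundedContinuousFunction ↥(GammaSet L) W,
      (∀ (Φ : evenSubspace V W L) (x : ↥L),
        I Φ (gammaPt L x) = (Φ : BoundedContinuousFunction ↥L W) x) ∧
      IsClosed (Set.range fun Φ : evenSubspace V W L => I Φ) := by
  set I := (evenEquiv W hLsym).symm
  have hI := evenEquiv_symm_apply_gammaPt (W := W) hLsym
  refine ⟨fun Φ => ⟨I Φ, ⟨(I Φ).continuous, hI Φ⟩, fun f hf => ?_⟩, I.toLinearIsometry, hI, ?_⟩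
  · exact (gammaPt_surjective L).injective_comp_right (funext fun x => (hf.2 x).trans (hI Φ x).symm)
  · simpa only [LinearIsometryEquiv.coe_toLinearIsometry, I.surjective.range_eq] using isClosed_univ

theorem statement5 {V W : Type*} [NormedAddCommGroup V] [NormedSpace ℝ V] [CompleteSpace V]
    [NormedAddCommGroup W] [NormedSpace ℝ W] [CompleteSpace W]
    (L : Set V) (hLne : L.Nonempty) (hLsym : ∀ x ∈ L, -x ∈ L) (hLclosed : IsClosed L) :
    (∀ Φ : evenSubspace V W L,
      ∃! Φt : ↥(GammaSet L) → W, Continuous Φt ∧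
        ∀ x : ↥L, Φt (gammaPt L x) = (Φ : BoundedContinuousFunction ↥L W) x) ∧
    ∃ I : ↥(evenSubspace V W L) →ₗᵢ[ℝ] BoundedContinuousFunction ↥(GammaSet L) W,
      (∀ (Φ : evenSubspace V W L) (x : ↥L),
        I Φ (gammaPt L x) = (Φ : BoundedContinuousFunction ↥L W) x) ∧
      IsClosed (Set.range fun Φ : evenSubspace V W L => I Φ) :=
  statement5_general L hLsym

end
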